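/- Let A be an m×n real matrix partitioned as A = [[A₁₁, A₁₂],[A₂₁, A₂₂]] with A₁₁ a nonsingular k×k block, k < min(m,n). Then σ_{k+1}(A) ≤ √((m−k)(n−k)) · ‖A/A₁₁‖_C. In particular, if ‖A/A₁₁‖_C ≤ ρβ for some ρ ≥ 1 and β > 0, then σ_{k+1}(A) ≤ ρβ√((m−k)(n−k)). -/

import Mathlib

/-! Multiplying the block matrix `A` on the right by `N = [-A₁₁⁻¹ A₁₂; 1]` kills the top block
row and leaves the Schur complement `S` below, so on the `(n - k)`-dimensional range of `N` we get
`‖A (N y)‖² = ‖S y‖² ≤ (m - k)(n - k) ‖S‖_C² ‖y‖² ≤ (m - k)(n - k) ‖S‖_C² ‖N y‖²`.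
By the min-max principle for the eigenvalues of `Aᵀ A`, a subspace of dimension `n - k` on which
`‖A x‖² ≤ c ‖x‖²` forces `σ_{k+1}(A)² ≤ c`. -/

open Matrix

/-- The maximum absolute entry norm `‖·‖_C` of a matrix. -/
noncomputable def cnorm {m n : Type*} [Fintype m] [Fintype n]
    (M : Matrix m n ℝ) : ℝ := ⨆ i, ⨆ j, |M i j|

/-- The `k`-th largest value (1-indexed) of a finite family of reals. -/
noncomputable def kthLargest {ι : Type*} [Fintype ι] (f : ι → ℝ) (k : ℕ) : ℝ :=
  ((Finset.univ.val.map f).sort (· ≤ ·)).getD (Fintype.card ι - k) 0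

/-- The `k`-th largest singular value (1-indexed) of a real matrix,
i.e. the square root of the `k`-th largest eigenvalue of `Aᴴ * A`. -/
noncomputable def singularValue {m n : Type*} [Fintype m] [Fintype n] [DecidableEq n]
    (A : Matrix m n ℝ) (k : ℕ) : ℝ :=
  Real.sqrt (kthLargest (Matrix.isHermitian_conjTranspose_mul_self A).eigenvalues k)

open Finset

lemma List.Pairwise.getD_le_of_lt_countP {α : Type*} [LinearOrder α] {l : List α}
    (hl : l.Pairwise (· ≤ ·)) {c d : α} {j : ℕ} (hj : j < l.countP (· ≤ c)) :
    l.getD j d ≤ c := by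
  induction l generalizing j with
  | nil => simp at hj
  | cons a l ih =>
    rw [List.pairwise_cons] at hl
    cases j with
    | zero =>
      obtain ⟨x, hx, hxc⟩ := List.countP_pos_iff.mp (Nat.zero_lt_of_lt hj)
      rcases List.mem_cons.mp hx with rfl | hx
      · simpa using hxc
      · simpa using (hl.1 x hx).trans (of_decide_eq_true hxc)
    | succ j =>
      rw [List.getD_cons_succ]
      refine ih hl.2 ?_
      have := List.countP_cons (p := (· ≤ c)) (a := a) (l := l)
      split_ifs at this <;> omega

lemma kthLargest_succ_le {ι : Type*} [Fintype ι] (f : ι → ℝ) {k : ℕ} {c : ℝ}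
    (hk : k < Fintype.card ι) (hc : Fintype.card ι ≤ k + #{i | f i ≤ c}) :
    kthLargest f (k + 1) ≤ c := by
  refine (Multiset.pairwise_sort _ _).getD_le_of_lt_countP ?_
  have hcount : ((univ.val.map f).sort (· ≤ ·)).countP (· ≤ c) = #{i | f i ≤ c} := by
    rw [← Multiset.coe_countP, Multiset.sort_eq, Multiset.countP_map]
    rfl
  omega

namespace Matrix

lemma dotProduct_conjTranspose_mul_self_mulVec {m n : Type*} [Fintype m] [Fintype n]
    (A : Matrix m n ℝ) (x : n → ℝ) : x ⬝ᵥ (Aᴴ * A) *ᵥ x = (A *ᵥ x) ⬝ᵥ (A *ᵥ x) := by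
  rw [← mulVec_mulVec, dotProduct_mulVec, conjTranspose_eq_transpose_of_trivial,
    vecMul_transpose]

namespace IsHermitian

variable {ι : Type*} [Fintype ι] [DecidableEq ι] {H : Matrix ι ι ℝ} (hH : H.IsHermitian)

lemma dotProduct_mulVec_eq_sum_eigenvalues (x : ι → ℝ) :
    x ⬝ᵥ H *ᵥ x =
      ∑ i, hH.eigenvalues i * (star (hH.eigenvectorUnitary : Matrix ι ι ℝ) *ᵥ x) i ^ 2 := by
  conv_lhs => rw [hH.spectral_theorem, Unitary.conjStarAlgAut_apply]
  rw [← mulVec_mulVec, ← mulVec_mulVec, dotProduct_mulVec, ← mulVec_transpose,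
    ← conjTranspose_eq_transpose_of_trivial, ← star_eq_conjTranspose]
  simp only [dotProduct, mulVec_diagonal]
  refine sum_congr rfl fun i _ => ?_
  simp only [Function.comp_apply, RCLike.ofReal_real_eq_id, id]
  ring

lemma dotProduct_self_eq_sum_sq_star_eigenvectorUnitary_mulVec (x : ι → ℝ) :
    x ⬝ᵥ x = ∑ i, (star (hH.eigenvectorUnitary : Matrix ι ι ℝ) *ᵥ x) i ^ 2 := by
  simp only [sq, ← dotProduct.eq_1]
  rw [dotProduct_mulVec, ← mulVec_transpose, star_eq_conjTranspose,
    conjTranspose_eq_transpose_of_trivial, transpose_transpose, mulVec_mulVec,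
    ← conjTranspose_eq_transpose_of_trivial, ← star_eq_conjTranspose,
    Unitary.mul_star_self_of_mem hH.eigenvectorUnitary.2, one_mulVec, dotProduct_comm]

lemma eq_zero_of_dotProduct_mulVec_le {c : ℝ} {x : ι → ℝ} (hx : x ⬝ᵥ H *ᵥ x ≤ c * (x ⬝ᵥ x))
    (hlow : ∀ i, hH.eigenvalues i ≤ c →
      (star (hH.eigenvectorUnitary : Matrix ι ι ℝ) *ᵥ x) i = 0) :
    x = 0 := by
  set w := star (hH.eigenvectorUnitary : Matrix ι ι ℝ) *ᵥ x
  have hterm : ∀ i, 0 ≤ (hH.eigenvalues i - c) * w i ^ 2 := fun i => by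
    rcases le_or_gt (hH.eigenvalues i) c with hi | hi
    · simp [hlow i hi]
    · exact mul_nonneg (sub_nonneg.2 hi.le) (sq_nonneg _)
  have hsum : ∑ i, (hH.eigenvalues i - c) * w i ^ 2 = 0 := by
    refine le_antisymm ?_ (sum_nonneg fun i _ => hterm i)
    rw [hH.dotProduct_mulVec_eq_sum_eigenvalues,
      hH.dotProduct_self_eq_sum_sq_star_eigenvectorUnitary_mulVec, mul_sum] at hx
    simpa only [sub_mul, sum_sub_distrib, sub_nonpos] using hx
  have hw : w = 0 := funext fun i => by
    rcases le_or_gt (hH.eigenvalues i) c with hi | hi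
    · exact hlow i hi
    · have := (sum_eq_zero_iff_of_nonneg fun i _ => hterm i).1 hsum i (mem_univ i)
      simpa [(sub_pos.2 hi).ne'] using this
  calc x = (hH.eigenvectorUnitary : Matrix ι ι ℝ) *ᵥ w := by
        rw [mulVec_mulVec, Unitary.mul_star_self_of_mem hH.eigenvectorUnitary.2, one_mulVec]
    _ = 0 := by rw [hw, mulVec_zero]

lemma finrank_le_card_eigenvalues_le {c : ℝ} (V : Submodule ℝ (ι → ℝ))
    (hV : ∀ x ∈ V, x ⬝ᵥ H *ᵥ x ≤ c * (x ⬝ᵥ x)) :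
    Module.finrank ℝ V ≤ #{i | hH.eigenvalues i ≤ c} := by
  let lowCoords : V →ₗ[ℝ] ({i // hH.eigenvalues i ≤ c} → ℝ) :=
    LinearMap.funLeft ℝ ℝ Subtype.val ∘ₗ
      (star (hH.eigenvectorUnitary : Matrix ι ι ℝ)).mulVecLin ∘ₗ V.subtype
  have hinj : Function.Injective lowCoords := by
    refine (injective_iff_map_eq_zero _).2 fun x hx => Subtype.ext ?_
    exact hH.eq_zero_of_dotProduct_mulVec_le (hV x x.2) fun i hi => congrFun hx ⟨i, hi⟩
  simpa [Fintype.card_subtype] using LinearMap.finrank_le_finrank_of_injective hinj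

end IsHermitian

lemma mulVec_dotProduct_self_le {m n : Type*} [Fintype m] [Fintype n] (M : Matrix m n ℝ)
    (y : n → ℝ) : (M *ᵥ y) ⬝ᵥ (M *ᵥ y) ≤ (∑ i, ∑ j, M i j ^ 2) * (y ⬝ᵥ y) := by
  have hy : y ⬝ᵥ y = ∑ j, y j ^ 2 := by simp only [dotProduct, sq]
  rw [hy, sum_mul]
  refine sum_le_sum fun i _ => ?_
  rw [← sq]
  exact sum_mul_sq_le_sq_mul_sq univ (M i) y

lemma fromBlocks_mul_fromRows_eq_fromRows_zero_schur {R k m n : Type*} [CommRing R]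
    [Fintype k] [Fintype n] [DecidableEq k] [DecidableEq n] (A₁₁ : Matrix k k R)
    (A₁₂ : Matrix k n R) (A₂₁ : Matrix m k R) (A₂₂ : Matrix m n R) (hA : IsUnit A₁₁.det) :
    fromBlocks A₁₁ A₁₂ A₂₁ A₂₂ * fromRows (-(A₁₁⁻¹ * A₁₂)) (1 : Matrix n n R) =
      fromRows 0 (A₂₂ - A₂₁ * A₁₁⁻¹ * A₁₂) := by
  rw [fromBlocks_mul_fromRows, Matrix.mul_neg, Matrix.mul_neg, ← Matrix.mul_assoc,
    mul_nonsing_inv _ hA, Matrix.one_mul, Matrix.mul_one, Matrix.mul_one, neg_add_cancel,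
    ← Matrix.mul_assoc, neg_add_eq_sub]

lemma singularValue_succ_le_sqrt {m n : Type*} [Fintype m] [Fintype n] [DecidableEq n]
    (A : Matrix m n ℝ) {k : ℕ} {c : ℝ} (V : Submodule ℝ (n → ℝ))
    (hk : k < Fintype.card n) (hV : Fintype.card n ≤ k + Module.finrank ℝ V)
    (hA : ∀ x ∈ V, (A *ᵥ x) ⬝ᵥ (A *ᵥ x) ≤ c * (x ⬝ᵥ x)) :
    singularValue A (k + 1) ≤ √c := by
  have hH := isHermitian_conjTranspose_mul_self A
  have hcount := hH.finrank_le_card_eigenvalues_le V fun x hx => by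
    rw [dotProduct_conjTranspose_mul_self_mulVec]
    exact hA x hx
  exact Real.sqrt_le_sqrt (kthLargest_succ_le _ hk (by omega))

end Matrix

lemma abs_le_cnorm {m n : Type*} [Fintype m] [Fintype n] (M : Matrix m n ℝ) (i : m) (j : n) :
    |M i j| ≤ cnorm M :=
  (le_ciSup (f := fun j => |M i j|) (Set.finite_range _).bddAbove j).trans
    (le_ciSup (f := fun i => ⨆ j, |M i j|) (Set.finite_range _).bddAbove i)

lemma cnorm_nonneg {m n : Type*} [Fintype m] [Fintype n] (M : Matrix m n ℝ) : 0 ≤ cnorm M :=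
  Real.iSup_nonneg fun _ => Real.iSup_nonneg fun _ => abs_nonneg _

lemma sum_sq_le_card_mul_cnorm_sq {m n : Type*} [Fintype m] [Fintype n] (M : Matrix m n ℝ) :
    ∑ i, ∑ j, M i j ^ 2 ≤ Fintype.card m * Fintype.card n * cnorm M ^ 2 := by
  calc ∑ i, ∑ j, M i j ^ 2 ≤ ∑ _i : m, ∑ _j : n, cnorm M ^ 2 :=
        sum_le_sum fun i _ => sum_le_sum fun j _ => by
          rw [← sq_abs]
          exact pow_le_pow_left₀ (abs_nonneg _) (abs_le_cnorm M i j) 2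
    _ = _ := by simp only [sum_const, card_univ, nsmul_eq_mul]; ring

theorem sigma_succ_le_schur_cnorm_general {k m₂ n₂ : ℕ} (hn : 0 < n₂)
    (A₁₁ : Matrix (Fin k) (Fin k) ℝ) (A₁₂ : Matrix (Fin k) (Fin n₂) ℝ)
    (A₂₁ : Matrix (Fin m₂) (Fin k) ℝ) (A₂₂ : Matrix (Fin m₂) (Fin n₂) ℝ)
    (hA : IsUnit A₁₁.det) :
    singularValue (Matrix.fromBlocks A₁₁ A₁₂ A₂₁ A₂₂) (k + 1) ≤
      Real.sqrt ((m₂ : ℝ) * (n₂ : ℝ)) * cnorm (A₂₂ - A₂₁ * A₁₁⁻¹ * A₁₂) ∧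
    ∀ ρ β : ℝ, 1 ≤ ρ → 0 < β → cnorm (A₂₂ - A₂₁ * A₁₁⁻¹ * A₁₂) ≤ ρ * β →
      singularValue (Matrix.fromBlocks A₁₁ A₁₂ A₂₁ A₂₂) (k + 1) ≤
        ρ * β * Real.sqrt ((m₂ : ℝ) * (n₂ : ℝ)) := by
  set S := A₂₂ - A₂₁ * A₁₁⁻¹ * A₁₂
  set N : Matrix (Fin k ⊕ Fin n₂) (Fin n₂) ℝ := fromRows (-(A₁₁⁻¹ * A₁₂)) 1
  have hNy (y : Fin n₂ → ℝ) : N *ᵥ y = Sum.elim (-(A₁₁⁻¹ * A₁₂) *ᵥ y) y := by simp [N]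
  have hN : Function.Injective N.mulVecLin := fun y z h => by
    simpa [hNy] using congrArg (· ∘ Sum.inr) h
  have hmain : singularValue (fromBlocks A₁₁ A₁₂ A₂₁ A₂₂) (k + 1) ≤ √(m₂ * n₂) * cnorm S := by
    rw [← Real.sqrt_sq (cnorm_nonneg S), ← Real.sqrt_mul (by positivity)]
    refine singularValue_succ_le_sqrt _ (LinearMap.range N.mulVecLin) (by simpa) ?_ ?_
    · simp [LinearMap.finrank_range_of_inj hN]
    rintro _ ⟨y, rfl⟩
    calc _ = (S *ᵥ y) ⬝ᵥ (S *ᵥ y) := by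
          rw [mulVecLin_apply, mulVec_mulVec,
            fromBlocks_mul_fromRows_eq_fromRows_zero_schur _ _ _ _ hA, fromRows_mulVec,
            sumElim_dotProduct_sumElim, zero_mulVec, zero_dotProduct, zero_add]
      _ ≤ (∑ i, ∑ j, S i j ^ 2) * (y ⬝ᵥ y) := mulVec_dotProduct_self_le S y
      _ ≤ (m₂ * n₂ * cnorm S ^ 2) * (N *ᵥ y ⬝ᵥ N *ᵥ y) := by
          gcongr
          · exact dotProduct_star_self_nonneg y
          · simpa using sum_sq_le_card_mul_cnorm_sq S
          · rw [hNy, sumElim_dotProduct_sumElim]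
            exact le_add_of_nonneg_left (dotProduct_star_self_nonneg _)
  refine ⟨hmain, fun ρ β _ _ hS => hmain.trans ?_⟩
  rw [mul_comm (ρ * β)]
  gcongr

/-- Let `A = [[A₁₁, A₁₂], [A₂₁, A₂₂]]` be an `m × n` real matrix with `A₁₁` a nonsingular
`k × k` block, `k < min(m,n)`.  Then `σ_{k+1}(A) ≤ √((m−k)(n−k)) * ‖A/A₁₁‖_C`.
In particular, if `‖A/A₁₁‖_C ≤ ρ β` for some `ρ ≥ 1`, `β > 0`, then
`σ_{k+1}(A) ≤ ρ β √((m−k)(n−k))`. -/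
theorem sigma_succ_le_schur_cnorm {k m₂ n₂ : ℕ} (hm : 0 < m₂) (hn : 0 < n₂)
    (A₁₁ : Matrix (Fin k) (Fin k) ℝ) (A₁₂ : Matrix (Fin k) (Fin n₂) ℝ)
    (A₂₁ : Matrix (Fin m₂) (Fin k) ℝ) (A₂₂ : Matrix (Fin m₂) (Fin n₂) ℝ)
    (hA : IsUnit A₁₁.det) :
    singularValue (Matrix.fromBlocks A₁₁ A₁₂ A₂₁ A₂₂) (k + 1) ≤
      Real.sqrt ((m₂ : ℝ) * (n₂ : ℝ)) * cnorm (A₂₂ - A₂₁ * A₁₁⁻¹ * A₁₂) ∧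
    ∀ ρ β : ℝ, 1 ≤ ρ → 0 < β → cnorm (A₂₂ - A₂₁ * A₁₁⁻¹ * A₁₂) ≤ ρ * β →
      singularValue (Matrix.fromBlocks A₁₁ A₁₂ A₂₁ A₂₂) (k + 1) ≤
        ρ * β * Real.sqrt ((m₂ : ℝ) * (n₂ : ℝ)) :=
  sigma_succ_le_schur_cnorm_general hn A₁₁ A₁₂ A₂₁ A₂₂ hA
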